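/- Let V(n) = p⌊nφ⌋ + qn + r be a generalized Beatty sequence, and let A(n) = ⌊nφ⌋ and B(n) = ⌊nφ⌋ + n be the lower and upper Wythoff sequences. Then V(A(n)) = (p+q)⌊nφ⌋ + pn + (r−p) and V(B(n)) = (2p+q)⌊nφ⌋ + (p+q)n + r for all n ≥ 1. -/

import Mathlib

noncomputable def phi : ℝ := (1 + Real.sqrt 5) / 2

/-!
Write `a = ⌊nφ⌋ = nφ - ε` with `ε = fract (nφ)`, which lies strictly between `0` and `1` because
`nφ` is irrational. From `φ² = φ + 1` one gets `aφ = a + n - ε(φ - 1)` and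
`(a + n)φ = 2a + n + ε(2 - φ)`; since `0 < φ - 1 < 1` and `0 < 2 - φ < 1`, the floors are
`a + n - 1` and `2a + n`. Substituting these into `V` gives both identities.
-/

open Real goldenRatio

theorem phi_eq_goldenRatio : phi = φ := rfl

namespace Real

theorem fract_intCast_mul_goldenRatio_pos {n : ℤ} (hn : n ≠ 0) : 0 < Int.fract (n * φ) :=
  Int.fract_pos.2 fun h => (goldenRatio_irrational.intCast_mul hn).ne_int _ h

theorem floor_floor_intCast_mul_goldenRatio_mul_goldenRatio {n : ℤ} (hn : n ≠ 0) :
    ⌊(⌊n * φ⌋ : ℝ) * φ⌋ = ⌊n * φ⌋ + n - 1 := by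
  set ε := Int.fract ((n : ℝ) * φ)
  have hε : 0 < ε * (φ - 1) :=
    mul_pos (fract_intCast_mul_goldenRatio_pos hn) (sub_pos.2 one_lt_goldenRatio)
  have hε₁ : ε * (φ - 1) < 1 := mul_lt_one_of_nonneg_of_lt_one_left (Int.fract_nonneg _)
    (Int.fract_lt_one _) (by linarith [goldenRatio_lt_two])
  have key : (⌊n * φ⌋ : ℝ) * φ = ⌊n * φ⌋ + n - ε * (φ - 1) := by
    rw [← Int.self_sub_fract]; linear_combination (n : ℝ) * goldenRatio_sq
  rw [Int.floor_eq_iff, key]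
  push_cast
  constructor <;> linarith

theorem floor_floor_intCast_mul_goldenRatio_add_mul_goldenRatio {n : ℤ} (hn : n ≠ 0) :
    ⌊((⌊n * φ⌋ + n : ℤ) : ℝ) * φ⌋ = 2 * ⌊n * φ⌋ + n := by
  set ε := Int.fract ((n : ℝ) * φ)
  have hε : 0 < ε * (2 - φ) :=
    mul_pos (fract_intCast_mul_goldenRatio_pos hn) (sub_pos.2 goldenRatio_lt_two)
  have hε₁ : ε * (2 - φ) < 1 := mul_lt_one_of_nonneg_of_lt_one_left (Int.fract_nonneg _)
    (Int.fract_lt_one _) (by linarith [one_lt_goldenRatio])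
  have key : ((⌊n * φ⌋ + n : ℤ) : ℝ) * φ = 2 * ⌊n * φ⌋ + n + ε * (2 - φ) := by
    push_cast; rw [← Int.self_sub_fract]; linear_combination (n : ℝ) * goldenRatio_sq
  rw [Int.floor_eq_iff, key]
  push_cast
  constructor <;> linarith

end Real

/-- Composition of a generalized Beatty sequence `V(p,q,r)` with the lower and upper
Wythoff sequences: `V∘A = V(p+q, p, r-p)` and `V∘B = V(2p+q, p+q, r)`. -/
theorem gbs_comp_wythoff (p q r : ℤ) (V : ℤ → ℤ)
    (hV : ∀ m : ℤ, V m = p * ⌊(m : ℝ) * phi⌋ + q * m + r)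
    (n : ℕ) (hn : 1 ≤ n) :
    V ⌊(n : ℝ) * phi⌋ = (p + q) * ⌊(n : ℝ) * phi⌋ + p * (n : ℤ) + (r - p) ∧
    V (⌊(n : ℝ) * phi⌋ + (n : ℤ)) = (2 * p + q) * ⌊(n : ℝ) * phi⌋ + (p + q) * (n : ℤ) + r := by
  have hn₀ : (n : ℤ) ≠ 0 := by omega
  have hA := floor_floor_intCast_mul_goldenRatio_mul_goldenRatio hn₀
  have hB := floor_floor_intCast_mul_goldenRatio_add_mul_goldenRatio hn₀
  simp only [Int.cast_natCast, ← phi_eq_goldenRatio] at hA hB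
  constructor
  · rw [hV, hA]; ring
  · rw [hV, hB]; ring
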